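/- arXiv:2112.11310 — 2 statements merged into one kernel-verified Lean document; each statement's English description precedes it below -/
import Mathlib

section
/- Let S be a semigroup, φ': X → E(S) a one-to-one mapping, and T a regular subsemigroup of S that is weakly generated by Xφ'. Then there exists a semigroup homomorphism φ̄: FT(X) → S with [x]φ̄ = xφ' for all x ∈ X whose image is exactly T. In particular, every regular semigroup weakly generated by a set X of idempotents is a homomorphic image of FT(X) under a homomorphism fixing X pointwise. -/
/-! Common definitions: the construction of `G(X)`, words, the congruence `ρ`,
the monoid `FT¹(X)`, landscapes, mountains, the maps `β₁, β₂, β`, Green's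
relations, sandwich sets, etc. -/

/-- Nested triples over `X` together with the extra symbol `1`. -/
inductive PreG (X : Type) : Type where
  | one : PreG X
  | base : X → PreG X
  | node : PreG X → PreG X → PreG X → PreG X

namespace PreG

variable {X : Type}

/-- The height `⋏(g)`. -/
def ht : PreG X → ℕ
  | one => 0
  | base _ => 1
  | node l _ _ => ht l + 1

/-- The left entry `g^l` (with `1^l = 1` and `x^l = 1` for `x ∈ X`). -/
def left : PreG X → PreG X
  | one => one
  | base _ => one
  | node l _ _ => l

/-- The right entry `g^r`. -/
def right : PreG X → PreG X
  | one => one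
  | base _ => one
  | node _ _ r => r

/-- The central entry `g^c` (with `x^c = x` for `x ∈ X` via `x = (1,x,1)`). -/
def center : PreG X → PreG X
  | one => one
  | base x => base x
  | node _ c _ => c

/-- Membership in `G(X) = ⋃_{i≥0} G_i(X)`. -/
inductive IsG : PreG X → Prop
  | one : IsG one
  | base (x : X) : IsG (base x)
  | node {l c r : PreG X} :
      IsG l → IsG c → IsG r →
      1 ≤ l.ht → l.ht = r.ht → c.ht + 1 = l.ht →
      l ≠ r →
      (c = l.left ∨ c = l.right) →
      (c = r.left ∨ c = r.right) →
      IsG (node l c r)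

theorem IsG.left_isG {g : PreG X} (h : g.IsG) : g.left.IsG := by
  cases h with
  | one => exact .one
  | base x => exact .one
  | node hl hc hr h1 h2 h3 h4 h5 h6 => exact hl

theorem IsG.right_isG {g : PreG X} (h : g.IsG) : g.right.IsG := by
  cases h with
  | one => exact .one
  | base x => exact .one
  | node hl hc hr h1 h2 h3 h4 h5 h6 => exact hr

theorem IsG.center_isG {g : PreG X} (h : g.IsG) : g.center.IsG := by
  cases h with
  | one => exact .one
  | base x => exact .base x
  | node hl hc hr h1 h2 h3 h4 h5 h6 => exact hc

/-- The ground `ε(g)`. -/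
def ground : PreG X → Set (PreG X)
  | one => {one}
  | base x => {one, base x}
  | node l c r => ground l ∪ {node l c r} ∪ ground r

end PreG

/-- The set `G(X)`. -/
def Gx (X : Type) : Type := {g : PreG X // g.IsG}

namespace Gx

variable {X : Type}

/-- The letter `1`. -/
def gone : Gx X := ⟨PreG.one, .one⟩

instance : Inhabited (Gx X) := ⟨gone⟩

/-- The letter corresponding to `x ∈ X`. -/
def ofX (x : X) : Gx X := ⟨PreG.base x, .base x⟩

/-- `g^l`. -/
def l (g : Gx X) : Gx X := ⟨g.1.left, g.2.left_isG⟩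

/-- `g^c`. -/
def c (g : Gx X) : Gx X := ⟨g.1.center, g.2.center_isG⟩

/-- `g^r`. -/
def r (g : Gx X) : Gx X := ⟨g.1.right, g.2.right_isG⟩

/-- The height of `g`. -/
def ht (g : Gx X) : ℕ := g.1.ht

theorem ht_c_lt : ∀ {g : Gx X}, 2 ≤ g.ht → g.c.ht < g.ht := by
  rintro ⟨g0, hg⟩ h
  cases hg with
  | one => simp [Gx.ht, PreG.ht] at h
  | base x => simp [Gx.ht, PreG.ht] at h
  | node hl hc hr hht hlr hc1 hne hcl hcr =>
    simp only [Gx.ht, Gx.c, PreG.center, PreG.ht] at *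
    omega

/-- The step relation of an uphill: `a ∈ {b^l, b^r}` for consecutive letters `a b`. -/
def stepUp (a b : Gx X) : Prop := a = b.l ∨ a = b.r

/-- The step relation of a downhill: `b ∈ {a^l, a^r}` for consecutive letters `a b`. -/
def stepDown (a b : Gx X) : Prop := b = a.l ∨ b = a.r

/-- The left hill `λ_l(g)` of the mountain `β₁(g)`. -/
def lamL (g : Gx X) : List (Gx X) :=
  if h : 2 ≤ g.ht then lamL g.c ++ [g.l, g]
  else if g.ht = 0 then [g] else [gone, g]
termination_by g.ht
decreasing_by exact ht_c_lt h

/-- The right hill `λ_r(g)` of the mountain `β₁(g)`. -/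
def lamR (g : Gx X) : List (Gx X) :=
  if h : 2 ≤ g.ht then [g, g.r] ++ lamR g.c
  else if g.ht = 0 then [g] else [g, gone]
termination_by g.ht
decreasing_by exact ht_c_lt h

end Gx

/-- The free semigroup `G(X)⁺` on `G(X)`. -/
abbrev Wd (X : Type) := FreeSemigroup (Gx X)

namespace Wd

variable {X : Type}

/-- The one-letter word. -/
def og (g : Gx X) : Wd X := FreeSemigroup.of g

/-- The list of letters of a word. -/
def toL (w : Wd X) : List (Gx X) := w.head :: w.tail

/-- The word with a given (nonempty) list of letters. -/
def ofL (w : List (Gx X)) : Wd X := ⟨w.headI, w.tail⟩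

end Wd

/-- The generating relation `ρ_e ∪ ρ_s`. -/
def rhoBase (X : Type) : Wd X → Wd X → Prop := fun a b =>
  (∃ g : Gx X,
     (a = Wd.og Gx.gone * Wd.og g ∧ b = Wd.og g) ∨
     (a = Wd.og g * Wd.og Gx.gone ∧ b = Wd.og g) ∨
     (a = Wd.og g * Wd.og g ∧ b = Wd.og g)) ∨
  (∃ g : Gx X, 2 ≤ g.ht ∧
     ((a = Wd.og g.c * Wd.og g.l * Wd.og g ∧ b = Wd.og g) ∨
      (a = Wd.og g * Wd.og g.r * Wd.og g.c ∧ b = Wd.og g) ∨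
      (a = Wd.og g.r * Wd.og g.c * Wd.og g * Wd.og g.c * Wd.og g.l ∧
       b = Wd.og g.r * Wd.og g.c * Wd.og g.l)))

/-- The congruence `ρ`: the smallest congruence containing `ρ_e ∪ ρ_s`. -/
def rho (X : Type) : Con (Wd X) := conGen (rhoBase X)

/-- The monoid `FT¹(X) = G(X)⁺/ρ`. -/
abbrev FT1 (X : Type) := (rho X).Quotient

/-- The `ρ`-class `[u]` of a word `u`. -/
def cls {X : Type} (u : Wd X) : FT1 X := (u : FT1 X)

/-- `FT(X) = FT¹(X) ∖ {[1]}`, as a subset of `FT¹(X)`. -/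
def FTset (X : Type) : Set (FT1 X) := {a | a ≠ cls (Wd.og Gx.gone)}

section Landscapes

variable {X : Type}

/-- Landscapes (as nonempty lists of letters). -/
def IsLandL (w : List (Gx X)) : Prop :=
  w ≠ [] ∧ w.Chain' (fun a b => Gx.stepUp a b ∨ Gx.stepDown a b)

/-- Uphills. -/
def IsUphillL (w : List (Gx X)) : Prop := w ≠ [] ∧ w.Chain' Gx.stepUp

/-- Downhills. -/
def IsDownhillL (w : List (Gx X)) : Prop := w ≠ [] ∧ w.Chain' Gx.stepDown

/-- No letter is a river. -/
def RiverFreeL : List (Gx X) → Prop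
  | a :: b :: c :: t =>
      ¬(a.ht = b.ht + 1 ∧ c.ht = b.ht + 1) ∧ RiverFreeL (b :: c :: t)
  | _ => True

/-- Mountains: landscapes with endpoints `1` and no rivers. -/
def IsMountainL (w : List (Gx X)) : Prop :=
  IsLandL w ∧ w.head? = some Gx.gone ∧ w.getLast? = some Gx.gone ∧ RiverFreeL w

/-- The set `M¹(X)` of all mountains. -/
def MSet (X : Type) : Set (List (Gx X)) := {w | IsMountainL w}

/-- `u * v`: concatenation merging the repeated junction letter. -/
def mergeL (u v : List (Gx X)) : List (Gx X) := u ++ v.tail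

open Classical in
/-- The maximal initial uphill `λ_l` of a landscape. -/
noncomputable def maxUp : List (Gx X) → List (Gx X)
  | a :: b :: t => if Gx.stepUp a b then a :: maxUp (b :: t) else [a]
  | w => w

/-- The maximal final downhill `λ_r` of a landscape. -/
noncomputable def lamRL (w : List (Gx X)) : List (Gx X) := (maxUp w.reverse).reverse

/-- The peak `κ` of a mountain. -/
noncomputable def peakL (w : List (Gx X)) : Gx X := (maxUp w).getLast?.getD Gx.gone

/-- `β₁` on a letter: the mountain `λ_l(g) * λ_r(g)`. -/
def beta1g (g : Gx X) : List (Gx X) := mergeL (Gx.lamL g) (Gx.lamR g)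

/-- `β₁` on a word: `β₁(g₀) * ⋯ * β₁(g_n)`. -/
def beta1L : List (Gx X) → List (Gx X)
  | [] => []
  | [g] => beta1g g
  | g :: t => mergeL (beta1g g) (beta1L t)

/-- One uplifting of a river. -/
def UpStep (u v : List (Gx X)) : Prop :=
  ∃ (p s : List (Gx X)) (a b c : Gx X),
    u = p ++ a :: b :: c :: s ∧ a.ht = b.ht + 1 ∧ c.ht = b.ht + 1 ∧
    ((a = c ∧ v = p ++ a :: s) ∨
     (a ≠ c ∧ ∃ d : Gx X, d.1 = PreG.node c.1 b.1 a.1 ∧ v = p ++ a :: d :: c :: s))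

/-- The reflexive and transitive closure `→*` of uplifting of rivers. -/
def UpStar : List (Gx X) → List (Gx X) → Prop := Relation.ReflTransGen UpStep

open Classical in
/-- `β₂(u)`: the unique landscape with no rivers reachable from `u` by
upliftings of rivers. -/
noncomputable def beta2L (u : List (Gx X)) : List (Gx X) :=
  if h : ∃ v, UpStar u v ∧ RiverFreeL v ∧ IsLandL v then h.choose else u

/-- `β(u) = β₂(β₁(u))`. -/
noncomputable def betaL (u : List (Gx X)) : List (Gx X) := beta2L (beta1L u)

/-- The operation `⊙` on mountains: `u ⊙ v = β₂(u * v)`. -/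
noncomputable def odotL (u v : List (Gx X)) : List (Gx X) := beta2L (mergeL u v)

/-- Valleys: a downhill followed by an uphill (junction merged). -/
def IsValleyL (w : List (Gx X)) : Prop :=
  ∃ d u : List (Gx X), IsDownhillL d ∧ IsUphillL u ∧ d.getLast? = u.head? ∧
    w = mergeL d u

/-- Canyons: valleys with equal endpoints. -/
def IsCanyonL (w : List (Gx X)) : Prop := IsValleyL w ∧ w.head? = w.getLast?

/-- Gorges: canyons `w` with `w →* σ(w)`. -/
def IsGorgeL (w : List (Gx X)) : Prop :=
  IsCanyonL w ∧ ∃ a, w.head? = some a ∧ UpStar w [a]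

end Landscapes

section Green

variable {X : Type}

/-- `a ≤_R b`. -/
def leR (a b : FT1 X) : Prop := ∃ m, a = b * m

/-- `a ≤_L b`. -/
def leL (a b : FT1 X) : Prop := ∃ m, a = m * b

/-- `a ≤_J b`. -/
def leJ (a b : FT1 X) : Prop := ∃ m n, a = m * b * n

/-- The right ideal `aM`. -/
def rSet (a : FT1 X) : Set (FT1 X) := {x | ∃ m, x = a * m}

/-- The left ideal `Ma`. -/
def lSet (a : FT1 X) : Set (FT1 X) := {x | ∃ m, x = m * a}

/-- The two-sided ideal `MaM`. -/
def jSet (a : FT1 X) : Set (FT1 X) := {x | ∃ m n, x = m * a * n}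

/-- Green's relation `R`. -/
def GreenR (a b : FT1 X) : Prop := rSet a = rSet b

/-- Green's relation `L`. -/
def GreenL (a b : FT1 X) : Prop := lSet a = lSet b

/-- Green's relation `J`. -/
def GreenJ (a b : FT1 X) : Prop := jSet a = jSet b

/-- Green's relation `H = L ∩ R`. -/
def GreenH (a b : FT1 X) : Prop := GreenR a b ∧ GreenL a b

/-- Green's relation `D = L ∨ R` (join as equivalence relations). -/
def GreenD : FT1 X → FT1 X → Prop :=
  Relation.EqvGen (fun a b => GreenL a b ∨ GreenR a b)

/-- The natural partial order on a regular semigroup: `s ≤ t` iff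
`s = et = tf` for some idempotents `e`, `f`. -/
def natLe (s t : FT1 X) : Prop :=
  ∃ e f : FT1 X, e * e = e ∧ f * f = f ∧ s = e * t ∧ s = t * f

end Green

/-- The sandwich set `S(e, f)`. -/
def sandwich {S : Type*} [Mul S] (e f : S) : Set S :=
  {h | h * h = h ∧ f * h = h ∧ h * e = h ∧ e * h * f = e * f}

/-- Skeleton mappings `φ : G(X) → E(S¹)`. -/
def IsSkeletonMap {X : Type} {S : Type} [Semigroup S] (φ : Gx X → WithOne S) : Prop :=
  (Function.Injective fun x : X => φ (Gx.ofX x)) ∧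
  (∀ x : X, ∃ s : S, s * s = s ∧ φ (Gx.ofX x) = (s : WithOne S)) ∧
  (∀ g : Gx X, φ g * φ g = φ g) ∧
  (∀ g : Gx X, g.ht = 1 → φ Gx.gone * φ g = φ g ∧ φ g * φ Gx.gone = φ g) ∧
  (∀ g : Gx X, 2 ≤ g.ht → φ g ∈ sandwich (φ g.r * φ g.c) (φ g.c * φ g.l))

/-!
Send every letter of `G(X)` into `T¹ = T ∪ {1}` by a skeleton map `ψ`: `1 ↦ 1`, `x ↦ φ' x`, and
`g = (g^l, g^c, g^r)` to an element of `T` in the sandwich set of the idempotents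
`ψ(g^r) ψ(g^c)` and `ψ(g^c) ψ(g^l)`. Such an element exists because `T` is regular (`f w e` for an
inverse `w` of `e f`), and the sandwich conditions give the relations `ρ_s`, so `ψ` induces
a homomorphism `FT¹(X) → T¹` that sends `FT(X)` into `T`.

The image of `FT(X)` is a regular subsemigroup because `FT¹(X)` is regular. Replace each letter
of a word by its mountain `β₁(g)` to obtain a landscape with the same value. Then repeatedly
remove a repeated letter, collapse `a b a` to `a` and uplift rivers `a b c` to `a (c, b, a) c`,
until only a single-peak landscape `m` remains. For such an `m`, `[m] [m^rev] [m] = [m]`, because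
every downhill zips up with its reverse. Weak generation then forces the image to be all of `T`.
-/

namespace Gx

variable {X : Type}

@[simp] theorem ht_gone : (gone : Gx X).ht = 0 := rfl

theorem eq_gone_of_ht_eq_zero {g : Gx X} (h : g.ht = 0) : g = gone := by
  obtain ⟨p, hp⟩ := g
  cases hp with
  | one => rfl
  | base x => cases h
  | node => cases h

theorem ht_l_add_one {g : Gx X} (h : 1 ≤ g.ht) : g.l.ht + 1 = g.ht := by
  obtain ⟨p, hp⟩ := g
  cases hp with
  | one => cases h
  | base x => rfl
  | node => rfl

theorem ht_r_add_one {g : Gx X} (h : 1 ≤ g.ht) : g.r.ht + 1 = g.ht := by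
  obtain ⟨p, hp⟩ := g
  cases hp with
  | one => cases h
  | base x => rfl
  | node _ _ _ _ hlr => exact congrArg (· + 1) hlr.symm

theorem stepUp_c_l {g : Gx X} (h : 2 ≤ g.ht) : stepUp g.c g.l := by
  obtain ⟨p, hp⟩ := g
  cases hp with
  | one => simp [ht, PreG.ht] at h
  | base x => simp [ht, PreG.ht] at h
  | node _ _ _ _ _ _ _ hcl => exact hcl.imp Subtype.ext Subtype.ext

theorem stepUp_c_r {g : Gx X} (h : 2 ≤ g.ht) : stepUp g.c g.r := by
  obtain ⟨p, hp⟩ := g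
  cases hp with
  | one => simp [ht, PreG.ht] at h
  | base x => simp [ht, PreG.ht] at h
  | node _ _ _ _ _ _ _ _ hcr => exact hcr.imp Subtype.ext Subtype.ext

theorem stepUp_gone_iff {a : Gx X} : stepUp a gone ↔ a = gone := or_self_iff

theorem ht_add_one_of_stepUp {a b : Gx X} (h : stepUp a b) (hb : 1 ≤ b.ht) :
    a.ht + 1 = b.ht := by
  rcases h with rfl | rfl
  exacts [ht_l_add_one hb, ht_r_add_one hb]

theorem one_le_ht_of_stepUp {a b : Gx X} (h : stepUp a b) (hne : a ≠ b) : 1 ≤ b.ht := by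
  by_contra! hb
  obtain rfl := eq_gone_of_ht_eq_zero (Nat.lt_one_iff.1 hb)
  exact hne (stepUp_gone_iff.1 h)

theorem ht_c_add_two {g : Gx X} (h : 2 ≤ g.ht) : g.c.ht + 2 = g.ht := by
  have hl := ht_l_add_one (g := g) (by omega)
  have hc := ht_add_one_of_stepUp (stepUp_c_l h) (by omega)
  omega

theorem eq_gone_of_stepUp {b g : Gx X} (h : stepUp b g) (hg : g.ht ≤ 1) : b = gone := by
  rcases Nat.eq_zero_or_pos g.ht with h0 | h0
  · obtain rfl := eq_gone_of_ht_eq_zero h0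
    exact stepUp_gone_iff.1 h
  · exact eq_gone_of_ht_eq_zero (by have := ht_add_one_of_stepUp h h0; omega)

theorem ht_le_ht_add_one_of_stepUp {a b : Gx X} (h : stepUp a b) : b.ht ≤ a.ht + 1 := by
  rcases Nat.eq_zero_or_pos b.ht with h0 | h0
  · omega
  · exact (ht_add_one_of_stepUp h h0).ge

theorem ht_le_of_stepUp {a b : Gx X} (h : stepUp a b) : a.ht ≤ b.ht := by
  rcases Nat.eq_zero_or_pos b.ht with h0 | h0
  · simp [eq_gone_of_stepUp h (by omega)]
  · exact (Nat.le_succ _).trans (ht_add_one_of_stepUp h h0).le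

theorem exists_uplift {a b c : Gx X} (hab : stepDown a b) (hbc : stepUp b c) (hac : a ≠ c)
    (ha : 1 ≤ a.ht) (hc : 1 ≤ c.ht) : ∃ d : Gx X, 2 ≤ d.ht ∧ d.l = c ∧ d.c = b ∧ d.r = a := by
  have hba := ht_add_one_of_stepUp hab ha
  have hbc' := ht_add_one_of_stepUp hbc hc
  refine ⟨⟨.node c.1 b.1 a.1, .node c.2 b.2 a.2 hc (by omega : c.ht = a.ht) hbc'
    (fun h => hac (Subtype.ext h).symm) (hbc.imp (congrArg Subtype.val) (congrArg Subtype.val))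
    (hab.imp (congrArg Subtype.val) (congrArg Subtype.val))⟩, ?_, rfl, rfl, rfl⟩
  show 2 ≤ c.ht + 1
  omega

end Gx

theorem mul_mul_self_of_rho_rels {M : Type*} [Semigroup M] {a l r c : M} (ha : a * a = a)
    (h₁ : c * l * a = a) (h₂ : a * r * c = a) (h₃ : r * c * a * c * l = r * c * l) :
    a * l * a = a ∧ a * r * a = a := by
  have hla : a * (l * a) = a :=
    calc a * (l * a) = a * r * c * (l * a) := by rw [h₂]
      _ = a * (r * c * l) * a := by simp only [mul_assoc]
      _ = a * (r * c * a * c * l) * a := by rw [h₃]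
      _ = (a * r * c) * a * (c * l * a) := by simp only [mul_assoc]
      _ = a := by rw [h₂, h₁, ha, ha]
  refine ⟨by rw [mul_assoc, hla], ?_⟩
  calc a * r * a = a * r * (c * l * a) := by rw [h₁]
    _ = (a * r * c) * (l * a) := by simp only [mul_assoc]
    _ = a := by rw [h₂, hla]

theorem mul_mul_eq_of_rho_rels {M : Type*} [Semigroup M] {a b c d : M} (hb : b * b = b)
    (h₁ : b * c * d = d) (h₂ : d * a * b = d) (h₃ : a * b * d * b * c = a * b * c) :
    a * b * c = a * d * c := by
  have hbd : b * d = d := by rw [← h₁, ← mul_assoc, ← mul_assoc, hb]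
  have hdb : d * b = d := by rw [← h₂, mul_assoc, hb]
  rw [← h₃, mul_assoc a b d, hbd, mul_assoc a d b, hdb]

namespace Gx

variable {X : Type} {M : Type*}

def RhoRelsAt [Mul M] (ψ : Gx X → M) (g : Gx X) : Prop :=
  ψ g * ψ g = ψ g ∧ (2 ≤ g.ht → ψ g.c * ψ g.l * ψ g = ψ g ∧ ψ g * ψ g.r * ψ g.c = ψ g ∧
    ψ g.r * ψ g.c * ψ g * ψ g.c * ψ g.l = ψ g.r * ψ g.c * ψ g.l)

/-- `ψ` sends the generating pairs `ρ_e ∪ ρ_s` of `ρ` to equalities. -/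
def RhoRels [MulOneClass M] (ψ : Gx X → M) : Prop := ψ gone = 1 ∧ ∀ g, RhoRelsAt ψ g

variable [Monoid M] {ψ : Gx X → M}

theorem RhoRelsAt.mul_mul_self_of_stepUp {g b : Gx X} (hg : RhoRelsAt ψ g) (h1 : ψ gone = 1)
    (hb : stepUp b g) : ψ g * ψ b * ψ g = ψ g := by
  obtain ⟨hidem, hrels⟩ := hg
  rcases Nat.lt_or_ge g.ht 2 with hlt | hge
  · rw [eq_gone_of_stepUp hb (by omega), h1, mul_one, hidem]
  · obtain ⟨r₁, r₂, r₃⟩ := hrels hge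
    have := mul_mul_self_of_rho_rels hidem r₁ r₂ r₃
    rcases hb with rfl | rfl
    exacts [this.1, this.2]

theorem RhoRelsAt.uplift {d : Gx X} (hd : RhoRelsAt ψ d) (hc : ψ d.c * ψ d.c = ψ d.c)
    (h2 : 2 ≤ d.ht) : ψ d.r * ψ d.c * ψ d.l = ψ d.r * ψ d * ψ d.l :=
  have ⟨r₁, r₂, r₃⟩ := hd.2 h2
  mul_mul_eq_of_rho_rels hc r₁ r₂ r₃

end Gx

namespace FT1

variable {X : Type}

open Gx

def of (g : Gx X) : FT1 X := cls (Wd.og g)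

theorem induction_on {p : FT1 X → Prop} (a : FT1 X) (of : ∀ g, p (of g))
    (mul : ∀ a b, p a → p b → p (a * b)) : p a :=
  Con.induction_on a fun u => FreeSemigroup.recOnMul u of fun _ _ hg hv => mul _ _ hg hv

theorem cls_eq_of_rhoBase {u v : Wd X} (h : rhoBase X u v) : cls u = cls v :=
  (Con.eq _).2 (ConGen.Rel.of _ _ h)

theorem gone_mul (a : FT1 X) : of gone * a = a := by
  induction a using induction_on with
  | of g => exact cls_eq_of_rhoBase (.inl ⟨g, .inl ⟨rfl, rfl⟩⟩)
  | mul a b ha _ => rw [← mul_assoc, ha]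

theorem mul_gone (a : FT1 X) : a * of gone = a := by
  induction a using induction_on with
  | of g => exact cls_eq_of_rhoBase (.inl ⟨g, .inr (.inl ⟨rfl, rfl⟩)⟩)
  | mul a b _ hb => rw [mul_assoc, hb]

instance : Monoid (FT1 X) where
  one := of gone
  one_mul := gone_mul
  mul_one := mul_gone

theorem of_gone : of (gone : Gx X) = 1 := rfl

theorem rhoRels_of : RhoRels (of : Gx X → FT1 X) :=
  ⟨rfl, fun g => ⟨cls_eq_of_rhoBase (.inl ⟨g, .inr (.inr ⟨rfl, rfl⟩)⟩), fun h =>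
    ⟨cls_eq_of_rhoBase (.inr ⟨g, h, .inl ⟨rfl, rfl⟩⟩),
      cls_eq_of_rhoBase (.inr ⟨g, h, .inr (.inl ⟨rfl, rfl⟩)⟩),
      cls_eq_of_rhoBase (.inr ⟨g, h, .inr (.inr ⟨rfl, rfl⟩)⟩)⟩⟩⟩

theorem of_mul_self (g : Gx X) : of g * of g = of g := (rhoRels_of.2 g).1

variable {M : Type*} [Monoid M]

theorem rho_le_ker {ψ : Gx X → M} (hψ : RhoRels ψ) :
    rho X ≤ Con.ker (FreeSemigroup.lift ψ) := by
  refine Con.conGen_le.2 ?_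
  rintro _ _ (⟨g, ⟨rfl, rfl⟩ | ⟨rfl, rfl⟩ | ⟨rfl, rfl⟩⟩ |
      ⟨g, h, ⟨rfl, rfl⟩ | ⟨rfl, rfl⟩ | ⟨rfl, rfl⟩⟩) <;>
    simp only [Con.ker_rel, map_mul, Wd.og, FreeSemigroup.lift_of]
  · rw [hψ.1, one_mul]
  · rw [hψ.1, mul_one]
  · exact (hψ.2 g).1
  · exact ((hψ.2 g).2 h).1
  · exact ((hψ.2 g).2 h).2.1
  · exact ((hψ.2 g).2 h).2.2

def lift (ψ : Gx X → M) (hψ : RhoRels ψ) : FT1 X →* M where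
  toFun a := Con.liftOn a (FreeSemigroup.lift ψ) fun _ _ h => rho_le_ker hψ h
  map_one' := hψ.1
  map_mul' a b := Con.induction_on₂ a b (map_mul (FreeSemigroup.lift ψ))

end FT1

section Merge

variable {X : Type} {u v : List (Gx X)}

theorem exists_eq_of_getLast?_eq_head? (h : u.getLast? = v.head?) (hv : v ≠ []) :
    ∃ u' t x, u = u' ++ [x] ∧ v = x :: t ∧ mergeL u v = u' ++ x :: t := by
  obtain ⟨x, t, rfl⟩ := List.exists_cons_of_ne_nil hv
  obtain ⟨u', rfl⟩ := List.getLast?_eq_some_iff.1 h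
  exact ⟨u', t, x, rfl, rfl, by simp [mergeL]⟩

theorem head?_mergeL (hu : u ≠ []) : (mergeL u v).head? = u.head? := by
  simp [mergeL, List.head?_append_of_ne_nil _ hu]

theorem getLast?_mergeL (h : u.getLast? = v.head?) : (mergeL u v).getLast? = v.getLast? := by
  rcases eq_or_ne v [] with rfl | hv
  · simpa [mergeL] using h
  obtain ⟨u', t, x, rfl, rfl, hm⟩ := exists_eq_of_getLast?_eq_head? h hv
  simp [hm, List.getLast?_cons]

theorem isLandL_mergeL (hu : IsLandL u) (hv : IsLandL v) (h : u.getLast? = v.head?) :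
    IsLandL (mergeL u v) := by
  obtain ⟨u', t, x, rfl, rfl, hm⟩ := exists_eq_of_getLast?_eq_head? h hv.1
  refine ⟨by simp [hm], ?_⟩
  rw [hm, ← List.singleton_append, ← List.append_assoc]
  exact List.IsChain.append_overlap hu.2 hv.2 (List.cons_ne_nil _ _)

end Merge

namespace FT1

variable {X : Type}

open Gx

def ofList (w : List (Gx X)) : FT1 X := (w.map of).prod

@[simp] theorem ofList_nil : ofList ([] : List (Gx X)) = 1 := rfl

@[simp] theorem ofList_cons (g : Gx X) (w : List (Gx X)) :
    ofList (g :: w) = of g * ofList w :=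
  List.prod_cons

@[simp] theorem ofList_append (u v : List (Gx X)) :
    ofList (u ++ v) = ofList u * ofList v := by
  simp [ofList]

theorem ofList_singleton (g : Gx X) : ofList [g] = of g := by simp

theorem cls_eq_ofList_toL (u : Wd X) : cls u = ofList (Wd.toL u) := by
  induction u using FreeSemigroup.recOnMul with
  | ih1 g => exact (ofList_singleton g).symm
  | ih2 g v _ hv => exact (congrArg (of g * ·) hv).trans (ofList_cons g _).symm

theorem ofList_mergeL {u v : List (Gx X)} (h : u.getLast? = v.head?) :
    ofList (mergeL u v) = ofList u * ofList v := by
  rcases eq_or_ne v [] with rfl | hv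
  · simp_all [mergeL]
  obtain ⟨u', t, x, rfl, rfl, hm⟩ := exists_eq_of_getLast?_eq_head? h hv
  simp [hm, mul_assoc, ← mul_assoc (of x), of_mul_self]

theorem lamL_spec (g : Gx X) : (lamL g).head? = some gone ∧ (lamL g).getLast? = some g ∧
    (lamL g).IsChain stepUp ∧ ofList (lamL g) = of g := by
  induction g using lamL.induct with
  | case1 g h ih =>
    obtain ⟨ih₁, ih₂, ih₃, ih₄⟩ := ih
    have hne : lamL g.c ≠ [] := by rintro h; simp [h] at ih₁
    rw [lamL.eq_1, dif_pos h]
    refine ⟨by simp [List.head?_append_of_ne_nil _ hne, ih₁], by simp, ?_, ?_⟩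
    · refine List.isChain_append.2 ⟨ih₃, List.isChain_pair.2 (.inl rfl), ?_⟩
      simp only [ih₂, Option.mem_def, Option.some.injEq, List.head?_cons]
      rintro _ rfl _ rfl
      exact stepUp_c_l h
    · rw [ofList_append, ih₄, ofList_cons, ofList_singleton, ← mul_assoc]
      exact ((rhoRels_of.2 g).2 h).1
  | case2 g h h0 =>
    obtain rfl := eq_gone_of_ht_eq_zero h0
    simp [lamL.eq_1]
  | case3 g h h0 =>
    rw [lamL.eq_1, dif_neg h, if_neg h0]
    refine ⟨rfl, rfl, List.isChain_pair.2 (.inl ?_), by simp [of_gone]⟩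
    exact (eq_gone_of_stepUp (.inl rfl) (by omega)).symm

theorem lamR_spec (g : Gx X) : (lamR g).head? = some g ∧ (lamR g).getLast? = some gone ∧
    (lamR g).IsChain stepDown ∧ ofList (lamR g) = of g := by
  induction g using lamR.induct with
  | case1 g h ih =>
    obtain ⟨ih₁, ih₂, ih₃, ih₄⟩ := ih
    rw [lamR.eq_1, dif_pos h]
    refine ⟨rfl, by simp [List.getLast?_cons, ih₂], ?_, ?_⟩
    · refine List.isChain_append.2 ⟨List.isChain_pair.2 (.inr rfl), ih₃, ?_⟩
      simp only [ih₁, Option.mem_def, Option.some.injEq, List.getLast?_cons_cons,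
        List.getLast?_singleton]
      rintro _ rfl _ rfl
      exact stepUp_c_r h
    · rw [ofList_append, ih₄, ofList_cons, ofList_singleton]
      exact ((rhoRels_of.2 g).2 h).2.1
  | case2 g h h0 =>
    obtain rfl := eq_gone_of_ht_eq_zero h0
    simp [lamR.eq_1]
  | case3 g h h0 =>
    rw [lamR.eq_1, dif_neg h, if_neg h0]
    refine ⟨rfl, rfl, List.isChain_pair.2 (.inl ?_), by simp [of_gone]⟩
    exact (eq_gone_of_stepUp (.inl rfl) (by omega)).symm

end FT1

section Reduction

variable {X : Type}

open Gx FT1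

theorem beta1g_spec (g : Gx X) : IsLandL (beta1g g) ∧ (beta1g g).head? = some gone ∧
    (beta1g g).getLast? = some gone ∧ ofList (beta1g g) = of g := by
  obtain ⟨l₁, l₂, l₃, l₄⟩ := lamL_spec g
  obtain ⟨r₁, r₂, r₃, r₄⟩ := lamR_spec g
  have hj : (lamL g).getLast? = (lamR g).head? := l₂.trans r₁.symm
  have hL : IsLandL (lamL g) := ⟨by rintro h; simp [h] at l₁, l₃.imp fun _ _ => .inl⟩
  have hR : IsLandL (lamR g) := ⟨by rintro h; simp [h] at r₁, r₃.imp fun _ _ => .inr⟩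
  exact ⟨isLandL_mergeL hL hR hj, (head?_mergeL hL.1).trans l₁, (getLast?_mergeL hj).trans r₂,
    by rw [beta1g, ofList_mergeL hj, l₄, r₄, of_mul_self]⟩

theorem beta1L_spec {w : List (Gx X)} (hw : w ≠ []) : IsLandL (beta1L w) ∧
    (beta1L w).head? = some gone ∧ (beta1L w).getLast? = some gone ∧
    ofList (beta1L w) = ofList w := by
  induction w using beta1L.induct with
  | case1 => exact absurd rfl hw
  | case2 g => simpa [beta1L] using beta1g_spec g
  | case3 g t ht ih =>
    obtain ⟨i₁, i₂, i₃, i₄⟩ := ih ht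
    obtain ⟨b₁, b₂, b₃, b₄⟩ := beta1g_spec g
    have hj := b₃.trans i₂.symm
    rw [beta1L.eq_3 g t ht]
    exact ⟨isLandL_mergeL b₁ i₁ hj, (head?_mergeL b₁.1).trans b₂,
      (getLast?_mergeL hj).trans i₃, by rw [ofList_mergeL hj, b₄, i₄, ofList_cons]⟩

/-- Landscapes consisting of an uphill followed by a downhill. -/
inductive IsSinglePeakL : List (Gx X) → Prop
  | downhill {g : Gx X} {d : List (Gx X)} : (g :: d).IsChain stepDown → IsSinglePeakL (g :: d)
  | cons {x y : Gx X} {t : List (Gx X)} :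
      stepUp x y → IsSinglePeakL (y :: t) → IsSinglePeakL (x :: y :: t)

inductive LandMove : List (Gx X) → List (Gx X) → Prop
  | flat (a : Gx X) (s : List (Gx X)) : LandMove (a :: a :: s) (a :: s)
  | collapse {a b : Gx X} (s : List (Gx X)) :
      stepDown a b → LandMove (a :: b :: a :: s) (a :: s)
  | uplift {a b c d : Gx X} (s : List (Gx X)) :
      2 ≤ d.ht → d.l = c → d.c = b → d.r = a → LandMove (a :: b :: c :: s) (a :: d :: c :: s)
  | cons (x : Gx X) {u v : List (Gx X)} : LandMove u v → LandMove (x :: u) (x :: v)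

def sumHt (w : List (Gx X)) : ℕ := (w.map Gx.ht).sum

namespace LandMove

variable {u v : List (Gx X)}

theorem ofList_eq (h : LandMove u v) : ofList u = ofList v := by
  induction h with
  | flat a s => simp [← mul_assoc, of_mul_self]
  | collapse s hab =>
    simp only [ofList_cons, ← mul_assoc]
    rw [(rhoRels_of.2 _).mul_mul_self_of_stepUp rfl hab]
  | uplift s h2 hl hc hr =>
    subst hl hc hr
    simp only [ofList_cons, ← mul_assoc]
    rw [(rhoRels_of.2 _).uplift (of_mul_self _) h2]
  | cons x _ ih => rw [ofList_cons, ofList_cons, ih]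

theorem head?_eq (h : LandMove u v) : v.head? = u.head? := by
  cases h <;> rfl

theorem isLandL (h : LandMove u v) (hu : IsLandL u) : IsLandL v := by
  refine ⟨by cases h <;> simp, ?_⟩
  replace hu := hu.2
  induction h with
  | flat a s => exact hu.tail
  | collapse s _ => exact hu.tail.tail
  | uplift s _ hl _ hr =>
    exact .cons_cons (.inl (.inr hr.symm)) (.cons_cons (.inr (.inl hl.symm)) hu.tail.tail)
  | cons x h ih =>
    refine List.isChain_cons.2 ⟨?_, ih (List.isChain_cons.1 hu).2⟩
    rw [h.head?_eq]
    exact (List.isChain_cons.1 hu).1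

theorem length_lt_or (h : LandMove u v) :
    v.length < u.length ∨ v.length = u.length ∧ sumHt v = sumHt u + 2 := by
  induction h with
  | flat a s => simp
  | collapse s _ => simp
  | uplift s h2 _ hc _ =>
    subst hc
    have := ht_c_add_two h2
    simp only [sumHt, List.map_cons, List.sum_cons, List.length_cons, true_and]
    omega
  | cons x _ ih =>
    simp only [sumHt, List.map_cons, List.sum_cons, List.length_cons] at ih ⊢
    omega

end LandMove

theorem exists_landMove_of_river {x y z : Gx X} (t : List (Gx X)) (hxy : stepDown x y)
    (hyz : stepUp y z) : ∃ v, LandMove (x :: y :: z :: t) v := by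
  by_cases hxy' : x = y
  · subst hxy'
    exact ⟨_, .flat _ _⟩
  by_cases hyz' : y = z
  · subst hyz'
    exact ⟨_, .cons x (.flat _ _)⟩
  by_cases hxz : x = z
  · subst hxz
    exact ⟨_, .collapse _ hxy⟩
  obtain ⟨d, h2, hl, hc, hr⟩ := exists_uplift hxy hyz hxz
    (one_le_ht_of_stepUp hxy (Ne.symm hxy')) (one_le_ht_of_stepUp hyz hyz')
  exact ⟨_, .uplift t h2 hl hc hr⟩

theorem IsLandL.isSinglePeakL_or_exists_landMove {w : List (Gx X)} (hw : IsLandL w) :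
    IsSinglePeakL w ∨ ∃ v, LandMove w v := by
  obtain ⟨hne, hc⟩ := hw
  induction w with
  | nil => exact absurd rfl hne
  | cons x t ih =>
    rcases t with _ | ⟨y, t⟩
    · exact .inl (.downhill (List.isChain_singleton x))
    obtain ⟨hxy, hyt⟩ := List.isChain_cons_cons.1 hc
    rcases ih (List.cons_ne_nil _ _) hyt with hpeak | ⟨v, hv⟩
    · rcases hxy with hxy | hxy
      · exact .inl (.cons hxy hpeak)
      cases hpeak with
      | downhill hd => exact .inl (.downhill (.cons_cons hxy hd))
      | cons hyz _ => exact .inr (exists_landMove_of_river _ hxy hyz)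
    · exact .inr ⟨_, .cons x hv⟩

theorem ht_lt_of_isChain {w : List (Gx X)}
    (hw : w.IsChain fun a b => stepUp a b ∨ stepDown a b) {k : ℕ}
    (hk : ∀ x ∈ w.head?, x.ht ≤ k) : ∀ y ∈ w, y.ht < k + w.length := by
  induction w generalizing k with
  | nil => simp
  | cons x t ih =>
    have hx := hk x rfl
    have ht : ∀ y ∈ t.head?, y.ht ≤ k + 1 := fun y hy => by
      rcases (List.isChain_cons.1 hw).1 y hy with h | h
      · have := ht_le_ht_add_one_of_stepUp h
        omega
      · have := ht_le_of_stepUp h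
        omega
    intro y hy
    rcases List.mem_cons.1 hy with rfl | hy
    · simp only [List.length_cons]
      omega
    · have := ih (List.isChain_cons.1 hw).2 ht y hy
      simp only [List.length_cons]
      omega

theorem sumHt_le {w : List (Gx X)} (hw : IsLandL w) (h : w.head? = some gone) :
    sumHt w ≤ w.length * w.length := by
  have hlt := ht_lt_of_isChain hw.2 (k := 0) (by simp [h])
  have := List.sum_le_card_nsmul (w.map ht) w.length (by simpa using fun y hy => (hlt y hy).le)
  simpa [sumHt] using this

theorem exists_isSinglePeakL_ofList_eq {w : List (Gx X)} (hw : IsLandL w)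
    (h : w.head? = some gone) : ∃ m, IsSinglePeakL m ∧ ofList w = ofList m := by
  rcases hw.isSinglePeakL_or_exists_landMove with hpeak | ⟨v, hv⟩
  · exact ⟨w, hpeak, rfl⟩
  · have hv' := hv.isLandL hw
    have hvh : v.head? = some gone := hv.head?_eq.trans h
    obtain ⟨m, hm, hvm⟩ := exists_isSinglePeakL_ofList_eq hv' hvh
    exact ⟨m, hm, hv.ofList_eq.trans hvm⟩
-- A move either shortens the landscape, or keeps its length and raises its height sum, which
-- stays below `length²` (`sumHt_le`).
termination_by (w.length, w.length * w.length - sumHt w)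
decreasing_by
  rcases hv.length_lt_or with hlt | ⟨hlen, hsum⟩
  · exact Prod.Lex.left _ _ hlt
  · have := sumHt_le hv' hvh
    rw [hlen] at this ⊢
    exact Prod.Lex.right _ (by omega)

end Reduction

theorem exists_inverse_of_mul_mul_eq {M : Type*} [Semigroup M] {a b : M} (h : a * b * a = a) :
    ∃ c, a * c * a = a ∧ c * a * c = c :=
  ⟨b * a * b, by simp only [← mul_assoc, h], by
    rw [show b * a * b * a * (b * a * b) = b * (a * b * a) * (b * a * b) by
        simp only [mul_assoc],
      h, show b * a * (b * a * b) = b * (a * b * a) * b by simp only [mul_assoc], h]⟩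

section Regularity

variable {X : Type}

open Gx FT1

theorem ofList_mul_ofList_reverse_of_isChain_stepDown {g : Gx X} {d : List (Gx X)}
    (h : (g :: d).IsChain stepDown) : ofList (g :: d) * ofList (g :: d).reverse = of g := by
  induction d generalizing g with
  | nil => simp [of_mul_self]
  | cons y d ih =>
    obtain ⟨hgy, hyd⟩ := List.isChain_cons_cons.1 h
    calc ofList (g :: y :: d) * ofList (g :: y :: d).reverse
        = of g * (ofList (y :: d) * ofList (y :: d).reverse) * of g := by
          rw [List.reverse_cons, ofList_append, ofList_cons, ofList_singleton]
          simp only [mul_assoc]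
      _ = of g := by rw [ih hyd, (rhoRels_of.2 g).mul_mul_self_of_stepUp rfl hgy]

theorem IsSinglePeakL.ofList_mul_mul {w : List (Gx X)} (h : IsSinglePeakL w) :
    ofList w * ofList w.reverse * ofList w = ofList w := by
  induction h with
  | downhill hd =>
    rw [ofList_mul_ofList_reverse_of_isChain_stepDown hd, ofList_cons, ← mul_assoc, of_mul_self]
  | @cons x y t hxy _ ih =>
    have hyxy : of y * of x * of y = of y := (rhoRels_of.2 y).mul_mul_self_of_stepUp rfl hxy
    have hx : ofList (y :: t).reverse * of x * ofList (y :: t) =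
        ofList (y :: t).reverse * ofList (y :: t) := by
      rw [List.reverse_cons, ofList_append, ofList_singleton, ofList_cons]
      calc ofList t.reverse * of y * of x * (of y * ofList t)
          = ofList t.reverse * (of y * of x * of y) * ofList t := by simp only [mul_assoc]
        _ = ofList t.reverse * (of y * of y) * ofList t := by rw [hyxy, of_mul_self]
        _ = ofList t.reverse * of y * (of y * ofList t) := by simp only [mul_assoc]
    calc ofList (x :: y :: t) * ofList (x :: y :: t).reverse * ofList (x :: y :: t)
        = of x * (ofList (y :: t) *
            (ofList (y :: t).reverse * (of x * of x) * ofList (y :: t))) := by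
          simp only [List.reverse_cons, ofList_append, ofList_cons, ofList_nil, mul_one,
            mul_assoc]
      _ = of x * ofList (y :: t) := by
          rw [of_mul_self, hx, ← mul_assoc (ofList (y :: t)), ih]

theorem FT1.exists_mul_mul_eq_self (a : FT1 X) : ∃ b, a * b * a = a := by
  induction a using Con.induction_on with
  | H u =>
    obtain ⟨hland, hhead, -, hval⟩ := beta1L_spec (w := Wd.toL u) (List.cons_ne_nil _ _)
    obtain ⟨m, hm, hm'⟩ := exists_isSinglePeakL_ofList_eq hland hhead
    refine ⟨ofList m.reverse, ?_⟩
    rw [show (u : FT1 X) = ofList m from (cls_eq_ofList_toL u).trans (hval.symm.trans hm')]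
    exact hm.ofList_mul_mul

theorem FT1.exists_inverse_mem_FTset {a : FT1 X} (ha : a ∈ FTset X) :
    ∃ b ∈ FTset X, a * b * a = a ∧ b * a * b = b := by
  obtain ⟨b, hb⟩ := exists_mul_mul_eq_self a
  obtain ⟨c, hc₁, hc₂⟩ := exists_inverse_of_mul_mul_eq hb
  refine ⟨c, fun h1 => ha ?_, hc₁, hc₂⟩
  rw [show c = 1 from h1, one_mul, mul_one] at hc₂
  exact hc₂

end Regularity

section Sandwich

variable {S : Type*} [Semigroup S]

theorem exists_mem_sandwich {T : Set S} (hmul : ∀ a ∈ T, ∀ b ∈ T, a * b ∈ T)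
    (hreg : ∀ a ∈ T, ∃ b ∈ T, a * b * a = a ∧ b * a * b = b) {e f : S} (he : e ∈ T)
    (hf : f ∈ T) (hee : e * e = e) (hff : f * f = f) : ∃ h ∈ T, h ∈ sandwich e f := by
  obtain ⟨w, hw, h₁, h₂⟩ := hreg (e * f) (hmul e he f hf)
  refine ⟨f * w * e, hmul _ (hmul f hf w hw) e he, ?_, ?_, ?_, ?_⟩
  · calc f * w * e * (f * w * e) = f * (w * (e * f) * w) * e := by simp only [mul_assoc]
      _ = f * w * e := by rw [h₂]
  · rw [← mul_assoc, ← mul_assoc, hff]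
  · rw [mul_assoc, hee]
  · calc e * (f * w * e) * f = e * f * w * (e * f) := by simp only [mul_assoc]
      _ = e * f := h₁

theorem rho_rels_of_mem_sandwich {l c r h : S} (hc : c * c = c)
    (hs : h ∈ sandwich (r * c) (c * l)) :
    c * l * h = h ∧ h * r * c = h ∧ r * c * h * c * l = r * c * l := by
  obtain ⟨-, h₁, h₂, h₃⟩ := hs
  refine ⟨h₁, by rw [mul_assoc, h₂], ?_⟩
  calc r * c * h * c * l = r * c * h * (c * l) := by simp only [mul_assoc]
    _ = r * (c * c) * l := by rw [h₃]; simp only [mul_assoc]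
    _ = r * c * l := by rw [hc]

theorem WithOne.mul_mem_image_coe {T : Set S} (hmul : ∀ a ∈ T, ∀ b ∈ T, a * b ∈ T)
    {x y : WithOne S} (hx : x ∈ (↑) '' T) (hy : y ∈ (↑) '' T) : x * y ∈ (↑) '' T := by
  obtain ⟨x, hx, rfl⟩ := hx
  obtain ⟨y, hy, rfl⟩ := hy
  exact ⟨x * y, hmul x hx y hy, WithOne.coe_mul x y⟩

theorem WithOne.coe_mem_sandwich {e f h : S} (hs : h ∈ sandwich e f) :
    (h : WithOne S) ∈ sandwich (e : WithOne S) f := by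
  simpa only [sandwich, Set.mem_ofPred_eq, ← WithOne.coe_mul, WithOne.coe_inj] using hs

end Sandwich

section Skeleton

variable {X : Type} {S : Type} [Semigroup S] (φ' : X → S) (T : Set S)

open Gx

open Classical in
/-- A skeleton map `G(X) → T¹` extending `φ'`. The fallback value `1` is never taken when `T` is
a regular subsemigroup (`skeleton_spec_of_two_le`). -/
noncomputable def skeletonPre : PreG X → WithOne S
  | .one => 1
  | .base x => φ' x
  | .node l c r =>
    if h : ∃ t ∈ T, (t : WithOne S) ∈
        sandwich (skeletonPre r * skeletonPre c) (skeletonPre c * skeletonPre l)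
    then (h.choose : WithOne S) else 1

noncomputable def skeleton (g : Gx X) : WithOne S := skeletonPre φ' T g.1

open Classical in
theorem skeleton_of_two_le {g : Gx X} (h : 2 ≤ g.ht) : skeleton φ' T g =
    if h : ∃ t ∈ T, (t : WithOne S) ∈ sandwich (skeleton φ' T g.r * skeleton φ' T g.c)
        (skeleton φ' T g.c * skeleton φ' T g.l)
    then (h.choose : WithOne S) else 1 := by
  obtain ⟨p, hp⟩ := g
  cases hp with
  | one => simp [ht, PreG.ht] at h
  | base x => simp [ht, PreG.ht] at h
  | node => rfl

variable {φ' T}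

theorem skeleton_spec_of_two_le (hmul : ∀ a ∈ T, ∀ b ∈ T, a * b ∈ T)
    (hreg : ∀ a ∈ T, ∃ b ∈ T, a * b * a = a ∧ b * a * b = b) {g : Gx X} (h2 : 2 ≤ g.ht)
    (hl : skeleton φ' T g.l ∈ (↑) '' T) (hr : skeleton φ' T g.r ∈ (↑) '' T)
    (hc : (1 ≤ g.c.ht → skeleton φ' T g.c ∈ (↑) '' T) ∧ RhoRelsAt (skeleton φ' T) g.c)
    (hlr : RhoRelsAt (skeleton φ' T) g.l) (hrr : RhoRelsAt (skeleton φ' T) g.r) :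
    skeleton φ' T g ∈ (↑) '' T ∧ RhoRelsAt (skeleton φ' T) g := by
  set ψ := skeleton φ' T
  have hψ1 : ψ gone = 1 := rfl
  have he : ψ g.r * ψ g.c ∈ ((↑) : S → WithOne S) '' T := by
    rcases Nat.eq_zero_or_pos g.c.ht with h0 | h0
    · rwa [eq_gone_of_ht_eq_zero h0, hψ1, mul_one]
    · exact WithOne.mul_mem_image_coe hmul hr (hc.1 h0)
  have hf : ψ g.c * ψ g.l ∈ ((↑) : S → WithOne S) '' T := by
    rcases Nat.eq_zero_or_pos g.c.ht with h0 | h0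
    · rwa [eq_gone_of_ht_eq_zero h0, hψ1, one_mul]
    · exact WithOne.mul_mem_image_coe hmul (hc.1 h0) hl
  have hee : ψ g.r * ψ g.c * (ψ g.r * ψ g.c) = ψ g.r * ψ g.c := by
    rw [← mul_assoc, hrr.mul_mul_self_of_stepUp hψ1 (stepUp_c_r h2)]
  have hff : ψ g.c * ψ g.l * (ψ g.c * ψ g.l) = ψ g.c * ψ g.l := by
    rw [mul_assoc, ← mul_assoc (ψ g.l), hlr.mul_mul_self_of_stepUp hψ1 (stepUp_c_l h2)]
  obtain ⟨e, heT, he⟩ := he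
  obtain ⟨f, hfT, hf⟩ := hf
  rw [← he] at hee
  rw [← hf] at hff
  obtain ⟨t, htT, hts⟩ := exists_mem_sandwich hmul hreg heT hfT
    (WithOne.coe_injective (by rwa [WithOne.coe_mul]))
    (WithOne.coe_injective (by rwa [WithOne.coe_mul]))
  have hex : ∃ t ∈ T, (t : WithOne S) ∈ sandwich (ψ g.r * ψ g.c) (ψ g.c * ψ g.l) :=
    ⟨t, htT, he ▸ hf ▸ WithOne.coe_mem_sandwich hts⟩
  have hval : ψ g = hex.choose := (skeleton_of_two_le φ' T h2).trans (dif_pos hex)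
  obtain ⟨htT', hts'⟩ := hex.choose_spec
  refine ⟨⟨_, htT', hval.symm⟩, by rw [hval]; exact hts'.1, fun _ => ?_⟩
  rw [hval]
  exact rho_rels_of_mem_sandwich hc.2.1 hts'

theorem skeleton_spec (hidem : ∀ x : X, φ' x * φ' x = φ' x)
    (hmul : ∀ a ∈ T, ∀ b ∈ T, a * b ∈ T)
    (hreg : ∀ a ∈ T, ∃ b ∈ T, a * b * a = a ∧ b * a * b = b) (hXT : ∀ x : X, φ' x ∈ T)
    (g : Gx X) : (1 ≤ g.ht → skeleton φ' T g ∈ (↑) '' T) ∧ RhoRelsAt (skeleton φ' T) g := by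
  obtain ⟨p, hp⟩ := g
  induction hp with
  | one => exact ⟨fun h => absurd h (by simp [ht, PreG.ht]), mul_one _,
      fun h => absurd h (by simp [ht, PreG.ht])⟩
  | base x =>
    refine ⟨fun _ => ⟨φ' x, hXT x, rfl⟩, ?_, fun h => absurd h (by simp [ht, PreG.ht])⟩
    exact (WithOne.coe_mul _ _).symm.trans (congrArg _ (hidem x))
  | node hl hc hr hht hlr hlc hne hcl hcr ihl ihc ihr =>
    have := skeleton_spec_of_two_le (g := ⟨_, .node hl hc hr hht hlr hlc hne hcl hcr⟩) hmul hreg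
      (Nat.succ_le_succ hht) (ihl.1 hht) (ihr.1 (hht.trans_eq hlr)) ihc ihl.2 ihr.2
    exact ⟨fun _ => this.1, this.2⟩

end Skeleton

theorem FT1.lift_mem_image_coe {X S : Type} [Semigroup S] {T : Set S}
    (hmul : ∀ a ∈ T, ∀ b ∈ T, a * b ∈ T) {ψ : Gx X → WithOne S} (hψ : Gx.RhoRels ψ)
    (hT : ∀ g : Gx X, 1 ≤ g.ht → ψ g ∈ (↑) '' T) {a : FT1 X} (ha : a ≠ 1) :
    FT1.lift ψ hψ a ∈ (↑) '' T := by
  suffices ∀ a : FT1 X, a = 1 ∨ FT1.lift ψ hψ a ∈ (↑) '' T from (this a).resolve_left ha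
  intro a
  induction a using FT1.induction_on with
  | of g =>
    rcases Nat.eq_zero_or_pos g.ht with h0 | h0
    · exact .inl (by rw [Gx.eq_gone_of_ht_eq_zero h0, FT1.of_gone])
    · exact .inr (hT g h0)
  | mul a b ha hb =>
    rcases ha with rfl | ha
    · rwa [one_mul]
    rcases hb with rfl | hb
    · rw [mul_one]
      exact .inr ha
    · exact .inr (by rw [map_mul]; exact WithOne.mul_mem_image_coe hmul ha hb)

theorem FT1.exists_monoidHom_withOne {X S : Type} [Semigroup S] {φ' : X → S} {T : Set S}
    (hidem : ∀ x : X, φ' x * φ' x = φ' x) (hmul : ∀ a ∈ T, ∀ b ∈ T, a * b ∈ T)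
    (hreg : ∀ a ∈ T, ∃ b ∈ T, a * b * a = a ∧ b * a * b = b) (hXT : ∀ x : X, φ' x ∈ T) :
    ∃ F : FT1 X →* WithOne S, (∀ x, F (FT1.of (Gx.ofX x)) = φ' x) ∧
      ∀ a ∈ FTset X, ∃ t ∈ T, ↑t = F a := by
  have hspec := skeleton_spec hidem hmul hreg hXT
  exact ⟨FT1.lift (skeleton φ' T) ⟨rfl, fun g => (hspec g).2⟩, fun _ => rfl,
    fun _ ha => FT1.lift_mem_image_coe hmul _ (fun g => (hspec g).1) ha⟩

section Image

variable {M N : Type*} [Mul M] [Mul N] {A : Set M} {f : M → N}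

theorem image_mul_mem (hA : ∀ a ∈ A, ∀ b ∈ A, a * b ∈ A)
    (hf : ∀ a ∈ A, ∀ b ∈ A, f (a * b) = f a * f b) :
    ∀ x ∈ f '' A, ∀ y ∈ f '' A, x * y ∈ f '' A := by
  rintro _ ⟨a, ha, rfl⟩ _ ⟨b, hb, rfl⟩
  exact ⟨a * b, hA a ha b hb, hf a ha b hb⟩

theorem image_exists_inverse (hA : ∀ a ∈ A, ∀ b ∈ A, a * b ∈ A)
    (hf : ∀ a ∈ A, ∀ b ∈ A, f (a * b) = f a * f b)
    (hreg : ∀ a ∈ A, ∃ b ∈ A, a * b * a = a ∧ b * a * b = b) :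
    ∀ x ∈ f '' A, ∃ y ∈ f '' A, x * y * x = x ∧ y * x * y = y := by
  rintro _ ⟨a, ha, rfl⟩
  obtain ⟨b, hb, h₁, h₂⟩ := hreg a ha
  refine ⟨f b, ⟨b, hb, rfl⟩, ?_, ?_⟩
  · rw [← hf a ha b hb, ← hf _ (hA a ha b hb) a ha, h₁]
  · rw [← hf b hb a ha, ← hf _ (hA b hb a ha) b hb, h₂]

end Image

theorem statement14_general {X : Type} [Nonempty X] {S : Type} [Semigroup S]
    (φ' : X → S) (hidem : ∀ x : X, φ' x * φ' x = φ' x)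
    (T : Set S)
    (hmul : ∀ a ∈ T, ∀ b ∈ T, a * b ∈ T)
    (hreg : ∀ a ∈ T, ∃ b ∈ T, a * b * a = a ∧ b * a * b = b)
    (hXT : ∀ x : X, φ' x ∈ T)
    (hweak : ∀ T' ⊆ T, (∀ a ∈ T', ∀ b ∈ T', a * b ∈ T') →
      (∀ a ∈ T', ∃ b ∈ T', a * b * a = a ∧ b * a * b = b) →
      (∀ x : X, φ' x ∈ T') → T' = T) :
    ∃ φb : FT1 X → S,
      (∀ a ∈ FTset X, ∀ b ∈ FTset X, φb (a * b) = φb a * φb b) ∧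
      (∀ x : X, φb (cls (Wd.og (Gx.ofX x))) = φ' x) ∧
      φb '' FTset X = T := by
  have : Nonempty S := .map φ' ‹_›
  obtain ⟨F, hF_of, hF⟩ := FT1.exists_monoidHom_withOne hidem hmul hreg hXT
  choose! φb hφbT hFφb using hF
  have hFT_mul : ∀ a ∈ FTset X, ∀ b ∈ FTset X, a * b ∈ FTset X := fun a ha b hb hab => by
    have := congrArg F hab
    rw [map_mul, ← hFφb a ha, ← hFφb b hb, ← WithOne.coe_mul] at this
    exact WithOne.coe_ne_one (this.trans (map_one F))
  have hφb_mul : ∀ a ∈ FTset X, ∀ b ∈ FTset X, φb (a * b) = φb a * φb b := fun a ha b hb =>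
    WithOne.coe_injective <| by
      rw [hFφb _ (hFT_mul a ha b hb), map_mul, ← hFφb a ha, ← hFφb b hb, WithOne.coe_mul]
  have hof_mem : ∀ x, cls (Wd.og (Gx.ofX x)) ∈ FTset X := fun x h =>
    WithOne.coe_ne_one (((hF_of x).symm.trans (congrArg F h)).trans (map_one F))
  have hof : ∀ x, φb (cls (Wd.og (Gx.ofX x))) = φ' x := fun x =>
    WithOne.coe_injective ((hFφb _ (hof_mem x)).trans (hF_of x))
  refine ⟨φb, hφb_mul, hof, hweak _ ?_ (image_mul_mem hFT_mul hφb_mul)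
    (image_exists_inverse hFT_mul hφb_mul fun _ => FT1.exists_inverse_mem_FTset)
    fun x => ⟨_, hof_mem x, hof x⟩⟩
  rintro _ ⟨a, ha, rfl⟩
  exact hφbT a ha

theorem statement14 {X : Type} [Nonempty X] {S : Type} [Semigroup S]
    (φ' : X → S) (hinj : Function.Injective φ') (hidem : ∀ x : X, φ' x * φ' x = φ' x)
    (T : Set S)
    (hmul : ∀ a ∈ T, ∀ b ∈ T, a * b ∈ T)
    (hreg : ∀ a ∈ T, ∃ b ∈ T, a * b * a = a ∧ b * a * b = b)
    (hXT : ∀ x : X, φ' x ∈ T)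
    (hweak : ∀ T' ⊆ T, (∀ a ∈ T', ∀ b ∈ T', a * b ∈ T') →
      (∀ a ∈ T', ∃ b ∈ T', a * b * a = a ∧ b * a * b = b) →
      (∀ x : X, φ' x ∈ T') → T' = T) :
    ∃ φb : FT1 X → S,
      (∀ a ∈ FTset X, ∀ b ∈ FTset X, φb (a * b) = φb a * φb b) ∧
      (∀ x : X, φb (cls (Wd.og (Gx.ofX x))) = φ' x) ∧
      φb '' FTset X = T :=
  statement14_general φ' hidem T hmul hreg hXT hweak
end

section
/- Let X be a set of cardinality n ≥ 2 and let g ∈ G_i(X) for some i ≥ 1. Then |G(g)| = (2^{2i−1}(3n−5)+4)/3, where G(g) = {g₁ ∈ G(X) : g₁^l = g or g₁^r = g}, and |G_{i+1}(X)| = ((4^{i−1}(3n−5)+2)/3) · |G_i(X)|. -/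
/-! The involution `(l, c, r) ↦ (r, c, l)` of `G(X)` shows that exactly half of `G(g)` has left
entry `g`. For `g = (g^l, g^c, g^r)` these are the triples `(g, c, r)` with `c ∈ {g^l, g^r}` and
`r ∈ G(c) ∖ {g}`; for `g = x ∈ X` they are the triples `(x, 1, y)` with `y ≠ x`. So `|G(g)|`
depends only on the height `i` of `g`, equals `2(n - 1)` for `i = 1` and gets multiplied by four
and decreased by four at each step, which is the closed form. Every element of `G_{i+1}(X)` lies
in `G(g)` for exactly two elements `g` of `G_i(X)`, its distinct left and right entries, so
double counting gives `2|G_{i+1}(X)| = |G(g)| · |G_i(X)|`. -/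

namespace PreG

variable {X : Type}

theorem IsG.eq_one_of_ht_eq_zero {p : PreG X} (hp : p.IsG) (h : p.ht = 0) : p = PreG.one := by
  cases hp <;> simp_all [ht]

theorem IsG.exists_eq_base_of_ht_eq_one {p : PreG X} (hp : p.IsG) (h : p.ht = 1) :
    ∃ x, p = PreG.base x := by
  cases hp with
  | base x => exact ⟨x, rfl⟩
  | one => simp [ht] at h
  | node _ _ _ h1 => simp only [ht] at h; omega

theorem IsG.ht_eq_succ {p c : PreG X} (hp : p.IsG) (hc : p.left = c ∨ p.right = c)
    (h : 1 ≤ c.ht) : p.ht = c.ht + 1 := by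
  cases hp with
  | one | base => rcases hc with rfl | rfl <;> simp [left, right, ht] at h
  | node _ _ _ _ hlr => rcases hc with rfl | rfl <;> simp [left, right, ht, hlr]

theorem IsG.left_ne_right {p : PreG X} (hp : p.IsG) (h : 1 ≤ p.left.ht) : p.left ≠ p.right := by
  cases hp with
  | node _ _ _ _ _ _ hne => exact hne
  | _ => simp [left, ht] at h

def swap : PreG X → PreG X
  | node l c r => node r c l
  | p => p

theorem swap_swap (p : PreG X) : p.swap.swap = p := by
  cases p <;> rfl

theorem left_swap (p : PreG X) : p.swap.left = p.right := by
  cases p <;> rfl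

theorem IsG.swap {p : PreG X} (hp : p.IsG) : p.swap.IsG := by
  cases hp with
  | one => exact .one
  | base x => exact .base x
  | node hl hc hr h1 hlr hcl hne hcl' hcr =>
    exact .node hr hc hl (hlr ▸ h1) hlr.symm (hlr ▸ hcl) (Ne.symm hne) hcr hcl'

/-- The paper's `G(g)`. -/
def above (g : PreG X) : Set (PreG X) := {p | p.IsG ∧ (p.left = g ∨ p.right = g)}

def aboveLeft (g : PreG X) : Set (PreG X) := {p | p.IsG ∧ p.left = g}

def aboveRight (g : PreG X) : Set (PreG X) := {p | p.IsG ∧ p.right = g}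

def level (X : Type) (j : ℕ) : Set (PreG X) := {p | p.IsG ∧ p.ht = j}

theorem level_add_two_subset (j : ℕ) :
    level X (j + 2) ⊆ (fun t => node t.1 t.2.1 t.2.2) ''
      (level X (j + 1) ×ˢ level X j ×ˢ level X (j + 1)) := by
  rintro p ⟨hp, hht⟩
  cases hp with
  | one | base => simp [ht] at hht
  | @node l c r hl hc hr _ hlr hcl =>
    simp only [ht] at hht
    exact ⟨(l, c, r), ⟨⟨hl, show l.ht = j + 1 by omega⟩, ⟨hc, show c.ht = j by omega⟩,
      ⟨hr, show r.ht = j + 1 by omega⟩⟩, rfl⟩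

theorem finite_level [Finite X] (j : ℕ) : (level X j).Finite := by
  induction j using Nat.strong_induction_on with
  | _ j ih =>
    match j with
    | 0 =>
      refine (Set.finite_singleton PreG.one).subset fun p hp => ?_
      exact hp.1.eq_one_of_ht_eq_zero hp.2
    | 1 =>
      refine (Set.finite_range base).subset fun p hp => ?_
      obtain ⟨x, rfl⟩ := hp.1.exists_eq_base_of_ht_eq_one hp.2
      exact ⟨x, rfl⟩
    | j + 2 =>
      exact (((ih (j + 1) (by omega)).prod ((ih j (by omega)).prod (ih (j + 1) (by omega)))).image
        _).subset (level_add_two_subset j)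

theorem above_subset_level {g : PreG X} (hg : 1 ≤ g.ht) : above g ⊆ level X (g.ht + 1) :=
  fun _ hp => ⟨hp.1, hp.1.ht_eq_succ hp.2 hg⟩

theorem finite_above [Finite X] {g : PreG X} (hg : 1 ≤ g.ht) : (above g).Finite :=
  (finite_level _).subset (above_subset_level hg)

theorem above_eq_union (g : PreG X) : above g = aboveLeft g ∪ aboveRight g := by
  ext; simp only [above, aboveLeft, aboveRight, Set.mem_union, Set.mem_ofPred_eq, and_or_left]

theorem aboveRight_eq_preimage_swap (g : PreG X) : aboveRight g = swap ⁻¹' aboveLeft g := by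
  ext p
  simp only [aboveRight, aboveLeft, Set.mem_preimage, Set.mem_ofPred_eq, left_swap]
  exact and_congr_left' ⟨IsG.swap, fun h => swap_swap p ▸ h.swap⟩

theorem ncard_above [Finite X] {g : PreG X} (hg : 1 ≤ g.ht) :
    (above g).ncard = 2 * (aboveLeft g).ncard := by
  have hdisj : Disjoint (aboveLeft g) (aboveRight g) :=
    Set.disjoint_left.2 fun p hl hr => hl.1.left_ne_right (hl.2 ▸ hg) (hl.2.trans hr.2.symm)
  have hfin := finite_above hg
  rw [above_eq_union] at hfin ⊢
  rw [Set.ncard_union_eq hdisj (hfin.subset Set.subset_union_left)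
    (hfin.subset Set.subset_union_right), aboveRight_eq_preimage_swap,
    Set.ncard_preimage_of_injective_subset_range (Function.LeftInverse.injective swap_swap)
      (fun p _ => ⟨p.swap, swap_swap p⟩)]
  ring

theorem aboveLeft_base (x : X) :
    aboveLeft (base x) = (fun y => node (base x) PreG.one (base y)) '' {x}ᶜ := by
  ext p
  constructor
  · rintro ⟨hp, hl⟩
    cases hp with
    | one | base => simp [left] at hl
    | @node l c r _ hc hr _ hlr hcl hne =>
      simp only [left] at hl
      subst hl
      simp only [ht] at hlr hcl
      obtain rfl := hc.eq_one_of_ht_eq_zero (by omega)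
      obtain ⟨y, rfl⟩ := hr.exists_eq_base_of_ht_eq_one hlr.symm
      exact ⟨y, fun hyx => hne (by rw [hyx]), rfl⟩
  · rintro ⟨y, hy, rfl⟩
    refine ⟨.node (.base x) .one (.base y) ?_ ?_ ?_ ?_ ?_ ?_, rfl⟩ <;>
      simp_all [ht, left, right, eq_comm]

theorem ncard_aboveLeft_base [Finite X] (x : X) : (aboveLeft (base x)).ncard = Nat.card X - 1 := by
  rw [aboveLeft_base, Set.ncard_image_of_injective _ (fun y z h => by simpa using h),
    Set.ncard_compl, Set.ncard_singleton]

theorem IsG.node_of_mem_above {g c r : PreG X} (hg : g.IsG) (hc : g.left = c ∨ g.right = c)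
    (hc1 : 1 ≤ c.ht) (hr : r ∈ above c) (hne : g ≠ r) : (PreG.node g c r).IsG := by
  have hcG : c.IsG := by rcases hc with rfl | rfl; exacts [hg.left_isG, hg.right_isG]
  have hgc := hg.ht_eq_succ hc hc1
  have hrc := hr.1.ht_eq_succ hr.2 hc1
  exact .node hg hcG hr.1 (by omega) (by omega) hgc.symm hne (hc.imp Eq.symm Eq.symm)
    (hr.2.imp Eq.symm Eq.symm)

theorem IsG.of_node {gl gc gr : PreG X} (hg : (PreG.node gl gc gr).IsG) :
    1 ≤ gl.ht ∧ gl.ht = gr.ht ∧ gl ≠ gr := by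
  cases hg with
  | node _ _ _ h1 hlr _ hne => exact ⟨h1, hlr, hne⟩

theorem aboveLeft_node {gl gc gr : PreG X} (hg : (node gl gc gr).IsG) :
    aboveLeft (node gl gc gr) =
      node (node gl gc gr) gl '' (above gl \ {node gl gc gr}) ∪
        node (node gl gc gr) gr '' (above gr \ {node gl gc gr}) := by
  obtain ⟨hgl, hlr, -⟩ := hg.of_node
  have hgr : 1 ≤ gr.ht := hlr ▸ hgl
  ext p
  constructor
  · rintro ⟨hp, hl⟩
    cases hp with
    | one | base => simp [left] at hl
    | @node l c r _ _ hr _ _ _ hne hcl hcr =>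
      simp only [left] at hl
      subst hl
      have hr' : r ∈ above c \ {node gl gc gr} := ⟨⟨hr, hcr.imp Eq.symm Eq.symm⟩, Ne.symm hne⟩
      simp only [left, right] at hcl
      rcases hcl with rfl | rfl
      exacts [Or.inl ⟨r, hr', rfl⟩, Or.inr ⟨r, hr', rfl⟩]
  · rintro (⟨r, ⟨hr, hne⟩, rfl⟩ | ⟨r, ⟨hr, hne⟩, rfl⟩)
    exacts [⟨hg.node_of_mem_above (Or.inl rfl) hgl hr (Ne.symm hne), rfl⟩,
      ⟨hg.node_of_mem_above (Or.inr rfl) hgr hr (Ne.symm hne), rfl⟩]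

theorem ncard_aboveLeft_node [Finite X] {gl gc gr : PreG X} (hg : (node gl gc gr).IsG) :
    (aboveLeft (node gl gc gr)).ncard = (above gl).ncard - 1 + ((above gr).ncard - 1) := by
  obtain ⟨hgl, hlr, hne⟩ := hg.of_node
  have hgr : 1 ≤ gr.ht := hlr ▸ hgl
  have hinj (c : PreG X) : Function.Injective (node (node gl gc gr) c) :=
    fun a b h => by simpa using h
  have hdisj : Disjoint (node (node gl gc gr) gl '' (above gl \ {node gl gc gr}))
      (node (node gl gc gr) gr '' (above gr \ {node gl gc gr})) := by
    refine Set.disjoint_left.2 ?_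
    rintro _ ⟨a, -, rfl⟩ ⟨b, -, h⟩
    exact hne (node.inj h).2.1.symm
  rw [aboveLeft_node hg, Set.ncard_union_eq hdisj (((finite_above hgl).sdiff).image _)
      (((finite_above hgr).sdiff).image _), Set.ncard_image_of_injective _ (hinj gl),
    Set.ncard_image_of_injective _ (hinj gr),
    Set.ncard_sdiff_singleton_of_mem (show _ ∈ above gl from ⟨hg, Or.inl rfl⟩),
    Set.ncard_sdiff_singleton_of_mem (show _ ∈ above gr from ⟨hg, Or.inr rfl⟩)]

/-- `aboveCount n j` is `|G(g)|` for `g` of height `j + 1`. -/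
def aboveCount (n : ℕ) : ℕ → ℕ
  | 0 => 2 * (n - 1)
  | j + 1 => 4 * (aboveCount n j - 1)

theorem ncard_above_eq_aboveCount [Finite X] (j : ℕ) :
    ∀ g ∈ level X (j + 1), (above g).ncard = aboveCount (Nat.card X) j := by
  induction j with
  | zero =>
    rintro g ⟨hg, hht⟩
    obtain ⟨x, rfl⟩ := hg.exists_eq_base_of_ht_eq_one hht
    rw [ncard_above hht.ge, ncard_aboveLeft_base, aboveCount]
  | succ j ih =>
    rintro (_ | _ | ⟨gl, gc, gr⟩) ⟨hg, hht⟩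
    all_goals simp only [ht] at hht
    · omega
    · omega
    obtain ⟨-, hlr, -⟩ := hg.of_node
    rw [ncard_above (by simp only [ht]; omega), ncard_aboveLeft_node hg, aboveCount,
      ih gl ⟨hg.left_isG, by omega⟩, ih gr ⟨hg.right_isG, by omega⟩]
    omega

theorem three_mul_aboveCount {n : ℕ} (hn : 2 ≤ n) (j : ℕ) :
    3 * aboveCount n j = 2 ^ (2 * j + 1) * (3 * n - 5) + 4 := by
  induction j with
  | zero => rw [aboveCount]; omega
  | succ j ih =>
    rw [aboveCount, show 2 * (j + 1) + 1 = 2 * j + 1 + 2 by ring, pow_add, mul_right_comm]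
    generalize 2 ^ (2 * j + 1) * (3 * n - 5) = E at ih ⊢
    omega

theorem ncard_level_mul_eq [Finite X] {i a : ℕ} (hi : 1 ≤ i)
    (ha : ∀ g ∈ level X i, (above g).ncard = a) :
    (level X i).ncard * a = (level X (i + 1)).ncard * 2 := by
  classical
  rw [Set.ncard_eq_toFinset_card _ (finite_level i),
    Set.ncard_eq_toFinset_card _ (finite_level (i + 1))]
  refine Finset.card_mul_eq_card_mul (fun g p => p.left = g ∨ p.right = g)
    (fun g hg => ?_) (fun p hp => ?_)
  · rw [Set.Finite.mem_toFinset] at hg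
    rw [← ha g hg, ← Set.ncard_coe_finset]
    congr 1
    ext p
    simp only [Finset.bipartiteAbove, Finset.coe_filter, Set.Finite.mem_toFinset]
    refine ⟨fun h => ⟨h.1.1, h.2⟩, fun h => ⟨?_, h.2⟩⟩
    simpa only [hg.2] using above_subset_level (hg.2 ▸ hi) h
  · rw [Set.Finite.mem_toFinset] at hp
    obtain ⟨hp, hht⟩ := hp
    cases p with
    | one | base => simp only [ht] at hht; omega
    | node l c r =>
      obtain ⟨-, hlr, hne⟩ := hp.of_node
      simp only [ht] at hht
      have hl : l ∈ level X i := ⟨hp.left_isG, by omega⟩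
      have hr : r ∈ level X i := ⟨hp.right_isG, by omega⟩
      have hbelow : Finset.bipartiteBelow (fun g p => p.left = g ∨ p.right = g)
          (finite_level i).toFinset (node l c r) = {l, r} := by
        ext g
        rw [Finset.mem_bipartiteBelow, Set.Finite.mem_toFinset, Finset.mem_insert,
          Finset.mem_singleton]
        simp only [left, right]
        constructor
        · rintro ⟨-, rfl | rfl⟩ <;> simp
        · rintro (rfl | rfl) <;> simp [hl, hr]
      rw [hbelow, Finset.card_pair hne]

theorem three_mul_ncard_level_add_two [Finite X] (hX : 2 ≤ Nat.card X) (j : ℕ) :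
    3 * (level X (j + 2)).ncard =
      (4 ^ j * (3 * Nat.card X - 5) + 2) * (level X (j + 1)).ncard := by
  have hcount := ncard_level_mul_eq (X := X) (Nat.le_add_left 1 j) (ncard_above_eq_aboveCount j)
  have hthree : 3 * aboveCount (Nat.card X) j = 2 * (4 ^ j * (3 * Nat.card X - 5) + 2) := by
    rw [three_mul_aboveCount hX, pow_succ, pow_mul]
    ring
  refine Nat.eq_of_mul_eq_mul_left two_pos ?_
  calc 2 * (3 * (level X (j + 2)).ncard)
      = 3 * ((level X (j + 1)).ncard * aboveCount (Nat.card X) j) := by rw [hcount]; ring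
    _ = 2 * ((4 ^ j * (3 * Nat.card X - 5) + 2) * (level X (j + 1)).ncard) := by
      rw [mul_left_comm, hthree]; ring

end PreG

namespace Gx

theorem ncard_setOf_val {X : Type} (P : PreG X → Prop) :
    {g : Gx X | P g.1}.ncard = {p : PreG X | p.IsG ∧ P p}.ncard := by
  have hpre : {g : Gx X | P g.1} = (fun g : Gx X => g.1) ⁻¹' {p | p.IsG ∧ P p} := by
    ext g
    exact (and_iff_right g.2).symm
  rw [hpre]
  exact Set.ncard_preimage_of_injective_subset_range Subtype.val_injective
    fun p hp => ⟨⟨p, hp.1⟩, rfl⟩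

theorem ncard_setOf_l_eq_or_r_eq {X : Type} (g : Gx X) :
    {g₁ : Gx X | g₁.l = g ∨ g₁.r = g}.ncard = (PreG.above g.1).ncard := by
  refine Eq.trans ?_ (ncard_setOf_val fun p => p.left = g.1 ∨ p.right = g.1)
  exact congrArg Set.ncard (Set.ext fun _ => or_congr Subtype.ext_iff Subtype.ext_iff)

theorem ncard_setOf_ht_eq {X : Type} (j : ℕ) :
    {h : Gx X | h.ht = j}.ncard = (PreG.level X j).ncard :=
  ncard_setOf_val fun p => p.ht = j

end Gx

theorem statement15 {X : Type} [Finite X] (n : ℕ) (hn : 2 ≤ n)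
    (hX : Nat.card X = n) (g : Gx X) (i : ℕ) (hi : 1 ≤ i) (hg : g.ht = i) :
    3 * Set.ncard {g₁ : Gx X | g₁.l = g ∨ g₁.r = g} = 2 ^ (2 * i - 1) * (3 * n - 5) + 4 ∧
    3 * Set.ncard {h : Gx X | h.ht = i + 1} =
      (4 ^ (i - 1) * (3 * n - 5) + 2) * Set.ncard {h : Gx X | h.ht = i} := by
  obtain ⟨j, rfl⟩ := Nat.exists_eq_add_of_le' hi
  subst hX
  rw [Gx.ncard_setOf_l_eq_or_r_eq, Gx.ncard_setOf_ht_eq, Gx.ncard_setOf_ht_eq,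
    PreG.ncard_above_eq_aboveCount j g.1 ⟨g.2, hg⟩, Nat.add_sub_cancel,
    show 2 * (j + 1) - 1 = 2 * j + 1 by omega]
  exact ⟨PreG.three_mul_aboveCount hn j, PreG.three_mul_ncard_level_add_two hn j⟩
end
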